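/- A finite graph Γ contains a Hamiltonian cycle if and only if its closure cl(Γ) contains a Hamiltonian cycle. -/

import Mathlib

/-- The vertex degree of `x` in a graph `Γ`. -/
noncomputable def vertexDegree {V : Type*} (Γ : SimpleGraph V) (x : V) : ℕ :=
  (Γ.neighborSet x).ncard

/-- The closure of a graph `Γ` with `m` vertices: `x`, `y` are joined iff they
are joined in `Γ` or `d(Γ,x) + d(Γ,y) ≥ m`. -/
def graphClosure {V : Type*} [Fintype V] (Γ : SimpleGraph V) : SimpleGraph V where
  Adj x y := x ≠ y ∧
    (Γ.Adj x y ∨ Fintype.card V ≤ vertexDegree Γ x + vertexDegree Γ y)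
  symm := by
    constructor
    rintro x y ⟨hxy, h⟩
    refine ⟨hxy.symm, ?_⟩
    rcases h with h | h
    · exact Or.inl h.symm
    · omega
  loopless := by constructor; rintro x ⟨hxx, -⟩; exact hxx rfl

/-!
Adding an edge `xy` with `deg x + deg y ≥ n` to a graph on `n` vertices cannot create a
Hamiltonian cycle (Bondy–Chvátal). A Hamiltonian cycle through the new edge leaves a
Hamiltonian path `x = v₀, v₁, …, v_{n-1} = y` of the old graph. Among the `n - 1` indices
`0 ≤ i < n - 1`, `x` is adjacent to `v_{i+1}` for exactly `deg x` of them and `y` to `v_i` for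
exactly `deg y` of them, so by pigeonhole some `i` has both; then
`x, …, v_i, y, v_{n-2}, …, v_{i+1}, x` is a Hamiltonian cycle of the old graph.
Every edge of `cl(Γ)` missing from `Γ` joins vertices whose degree sum is at least `n`
already in `Γ`, so removing these edges one at a time preserves a Hamiltonian cycle.
-/

open Finset

namespace SimpleGraph

variable {V : Type*} {G : SimpleGraph V}

/-- Unlike `SimpleGraph.IsHamiltonian`, this fails for the graph with one vertex. -/
def HasHamiltonianCycle [DecidableEq V] (G : SimpleGraph V) : Prop :=
  ∃ (v : V) (w : G.Walk v v), w.IsHamiltonianCycle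

lemma vertexDegree_mono [Fintype V] {H : SimpleGraph V} (h : G ≤ H) (x : V) :
    vertexDegree G x ≤ vertexDegree H x :=
  Set.ncard_le_ncard (fun _ hv => h hv) (Set.toFinite _)

namespace Walk

variable [DecidableEq V] {x y : V}

lemma IsHamiltonian.vertexDegree_eq_card_filter [DecidableRel G.Adj] {p : G.Walk x y}
    (hp : p.IsHamiltonian) (z : V) :
    vertexDegree G z = #{i ∈ range (p.length + 1) | G.Adj z (p.getVert i)} := by
  have hnbr : G.neighborSet z =
      p.getVert '' ↑{i ∈ range (p.length + 1) | G.Adj z (p.getVert i)} := by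
    ext w
    simp only [mem_neighborSet, coe_filter, mem_range, Set.mem_image, Set.mem_ofPred_eq,
      Nat.lt_succ_iff]
    constructor
    · intro hzw
      obtain ⟨i, rfl, hi⟩ := mem_support_iff_exists_getVert.mp (hp.mem_support w)
      exact ⟨i, ⟨hi, hzw⟩, rfl⟩
    · rintro ⟨i, ⟨-, hzw⟩, rfl⟩
      exact hzw
  rw [vertexDegree, hnbr, Set.InjOn.ncard_image, Set.ncard_coe_finset]
  exact hp.isPath.getVert_injOn.mono fun i hi => by
    simpa [Nat.lt_succ_iff] using (mem_filter.mp hi).1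

lemma IsHamiltonian.exists_adj_getVert_succ_and_adj_getVert [Fintype V] {p : G.Walk x y}
    (hp : p.IsHamiltonian) (hdeg : Fintype.card V ≤ vertexDegree G x + vertexDegree G y) :
    ∃ i, G.Adj x (p.getVert (i + 1)) ∧ G.Adj (p.getVert i) y := by
  classical
  by_contra! hnone
  have hx : vertexDegree G x =
      ∑ i ∈ range p.length, if G.Adj x (p.getVert (i + 1)) then 1 else 0 := by
    rw [hp.vertexDegree_eq_card_filter, card_filter, sum_range_succ']
    simp
  have hy : vertexDegree G y = ∑ i ∈ range p.length, if G.Adj (p.getVert i) y then 1 else 0 := by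
    rw [hp.vertexDegree_eq_card_filter, card_filter, sum_range_succ]
    simp [adj_comm]
  have hsum : vertexDegree G x + vertexDegree G y ≤ p.length := by
    rw [hx, hy, ← sum_add_distrib]
    calc _ ≤ ∑ _ ∈ range p.length, 1 := sum_le_sum fun i _ => by split_ifs <;> simp_all
      _ = p.length := by simp
  have hlen := hp.length_eq
  have hpos : 0 < Fintype.card V := Fintype.card_pos_iff.mpr ⟨x⟩
  omega

lemma IsHamiltonian.take_append_cons_reverse_drop {p : G.Walk x y} (hp : p.IsHamiltonian)
    {i : ℕ} (h : G.Adj (p.getVert i) y) :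
    ((p.take i).append (cons h (p.drop (i + 1)).reverse)).IsHamiltonian := by
  have hi : i < p.length := by
    by_contra! hi
    rw [p.getVert_of_length_le hi] at h
    exact h.ne rfl
  have hperm : List.Perm ((p.take i).append (cons h (p.drop (i + 1)).reverse)).support
      p.support := by
    rw [support_append, support_cons, List.tail_cons, support_reverse, support_take,
      drop_support_eq_support_drop_min, min_eq_left hi]
    exact ((List.reverse_perm _).append_left _).trans (by rw [List.take_append_drop])
  intro a
  rw [hperm.count_eq]
  exact hp a

lemma IsHamiltonian.isHamiltonianCycle_cons [Fintype V] {p : G.Walk y x} (hp : p.IsHamiltonian)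
    (h : G.Adj x y) (h3 : 3 ≤ Fintype.card V) : (cons h p).IsHamiltonianCycle := by
  have hlen := hp.length_eq
  rw [isHamiltonianCycle_iff_isCycle_and_length_eq, isCycle_iff_isPath_tail_and_le_length]
  simp only [tail_cons, length_cons]
  exact ⟨⟨by simpa using hp.isPath, by omega⟩, by omega⟩

lemma IsHamiltonian.hasHamiltonianCycle [Fintype V] {p : G.Walk x y} (hp : p.IsHamiltonian)
    (h3 : 3 ≤ Fintype.card V) (hdeg : Fintype.card V ≤ vertexDegree G x + vertexDegree G y) :
    G.HasHamiltonianCycle := by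
  obtain ⟨i, hx, hy⟩ := hp.exists_adj_getVert_succ_and_adj_getVert hdeg
  exact ⟨_, _, (hp.take_append_cons_reverse_drop hy).isHamiltonianCycle_cons hx.symm h3⟩

lemma IsHamiltonianCycle.reverse [Fintype V] {c : G.Walk x x} (hc : c.IsHamiltonianCycle) :
    c.reverse.IsHamiltonianCycle := by
  rw [isHamiltonianCycle_iff_isCycle_and_length_eq, length_reverse] at *
  exact ⟨hc.1.reverse, hc.2⟩

lemma IsHamiltonian.transfer {H : SimpleGraph V} {p : G.Walk x y} (hp : p.IsHamiltonian)
    (hH : ∀ e ∈ p.edges, e ∈ H.edgeSet) : (p.transfer H hH).IsHamiltonian := by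
  intro a
  rw [support_transfer]
  exact hp a

lemma IsHamiltonianCycle.transfer [Fintype V] {H : SimpleGraph V} {c : G.Walk x x}
    (hc : c.IsHamiltonianCycle) (hH : ∀ e ∈ c.edges, e ∈ H.edgeSet) :
    (c.transfer H hH).IsHamiltonianCycle := by
  rw [isHamiltonianCycle_iff_isCycle_and_length_eq, length_transfer] at *
  exact ⟨hc.1.transfer hH, hc.2⟩

omit [DecidableEq V] in
lemma IsCycle.snd_eq_or_penultimate_eq {c : G.Walk x x} (hc : c.IsCycle)
    (h : s(x, y) ∈ c.edges) : c.snd = y ∨ c.penultimate = y := by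
  rw [← cons_tail_eq c hc.not_nil, edges_cons, List.mem_cons] at h
  rcases h with h | h
  · exact Or.inl (Sym2.congr_right.mp h).symm
  · right
    rw [hc.isPath_tail.eq_penultimate_of_mem_edges h]
    have h3 := hc.three_le_length
    have hlen := length_tail_add_one hc.not_nil
    simp only [penultimate, getVert_tail]
    congr 1
    omega

lemma IsHamiltonianCycle.exists_isHamiltonian_of_snd_eq {c : G.Walk x x}
    (hc : c.IsHamiltonianCycle) (hy : c.snd = y) :
    ∃ p : G.Walk y x, p.IsHamiltonian ∧ s(x, y) ∉ p.edges := by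
  subst hy
  have hcons := hc.isCycle
  rw [← cons_tail_eq c hc.not_nil, cons_isCycle_iff] at hcons
  exact ⟨c.tail, hc.isHamiltonian_tail, hcons.2⟩

lemma IsHamiltonianCycle.exists_isHamiltonian_of_mem_edges [Fintype V] {v : V} {c : G.Walk v v}
    (hc : c.IsHamiltonianCycle) (h : s(x, y) ∈ c.edges) :
    ∃ p : G.Walk y x, p.IsHamiltonian ∧ s(x, y) ∉ p.edges := by
  have hc' := hc.rotate (hc.mem_support x)
  have h' : s(x, y) ∈ (c.rotate x (hc.mem_support x)).edges :=
    (rotate_edges ..).perm.mem_iff.mpr h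
  rcases hc'.isCycle.snd_eq_or_penultimate_eq h' with hy | hy
  · exact hc'.exists_isHamiltonian_of_snd_eq hy
  · exact hc'.reverse.exists_isHamiltonian_of_snd_eq (by rw [snd_reverse, hy])

omit [DecidableEq V] in
lemma edges_subset_edgeSet_of_notMem_edges_sup_edge {u v : V} {p : (G ⊔ edge x y).Walk u v}
    (h : s(x, y) ∉ p.edges) : ∀ e ∈ p.edges, e ∈ G.edgeSet := by
  intro e he
  rcases edgeSet_sup .. ▸ p.edges_subset_edgeSet he with he' | he'
  · exact he'
  · exact absurd (edgeSet_edge_subset he' ▸ he) h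

end Walk

open Walk

variable [DecidableEq V]

lemma HasHamiltonianCycle.mono {H : SimpleGraph V} (hle : G ≤ H) (hG : G.HasHamiltonianCycle) :
    H.HasHamiltonianCycle :=
  let ⟨v, c, hc⟩ := hG
  ⟨v, c.mapLe hle, hc.map Function.bijective_id⟩

variable [Fintype V]

lemma HasHamiltonianCycle.of_sup_edge {x y : V} (h : (G ⊔ edge x y).HasHamiltonianCycle)
    (hdeg : Fintype.card V ≤ vertexDegree G x + vertexDegree G y) : G.HasHamiltonianCycle := by
  obtain ⟨v, c, hc⟩ := h
  have h3 : 3 ≤ Fintype.card V := hc.length_eq ▸ hc.isCycle.three_le_length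
  by_cases hxy : s(x, y) ∈ c.edges
  · obtain ⟨p, hp, hpxy⟩ := hc.exists_isHamiltonian_of_mem_edges hxy
    exact (hp.transfer (edges_subset_edgeSet_of_notMem_edges_sup_edge hpxy)).hasHamiltonianCycle
      h3 (by rwa [add_comm])
  · exact ⟨v, _, hc.transfer (edges_subset_edgeSet_of_notMem_edges_sup_edge hxy)⟩

theorem HasHamiltonianCycle.of_le {Γ H : SimpleGraph V} (hle : Γ ≤ H)
    (hdeg : ∀ x y, H.Adj x y → ¬Γ.Adj x y →
      Fintype.card V ≤ vertexDegree Γ x + vertexDegree Γ y)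
    (hH : H.HasHamiltonianCycle) : Γ.HasHamiltonianCycle := by
  suffices ∀ G, Γ ≤ G → G ≤ H → G.HasHamiltonianCycle from this Γ le_rfl hle
  intro G
  induction G using WellFoundedGT.induction with
  | _ G ih =>
    intro hΓG hGH
    obtain rfl | hlt := hGH.eq_or_lt
    · exact hH
    obtain ⟨x, y, hxy, hnxy⟩ : ∃ x y, H.Adj x y ∧ ¬G.Adj x y := by
      by_contra! h
      exact hlt.not_ge fun _ _ => h _ _
    refine HasHamiltonianCycle.of_sup_edge (ih _ (lt_sup_edge _ _ _ hxy.ne hnxy)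
      (hΓG.trans le_sup_left) (sup_le hGH ((edge_le_iff H).mpr (Or.inr hxy)))) ?_
    exact (hdeg x y hxy fun h => hnxy (hΓG h)).trans
      (add_le_add (vertexDegree_mono hΓG x) (vertexDegree_mono hΓG y))

end SimpleGraph

lemma le_graphClosure {V : Type*} [Fintype V] (Γ : SimpleGraph V) : Γ ≤ graphClosure Γ :=
  fun _ _ h => ⟨h.ne, Or.inl h⟩

/-- closure criterion: a finite graph contains a Hamiltonian
cycle if and only if its closure contains a Hamiltonian cycle. -/
theorem stmt_7 {V : Type*} [Fintype V] [DecidableEq V] (Γ : SimpleGraph V) :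
    (∃ (v : V) (w : Γ.Walk v v), w.IsHamiltonianCycle) ↔
      ∃ (v : V) (w : (graphClosure Γ).Walk v v), w.IsHamiltonianCycle :=
  ⟨SimpleGraph.HasHamiltonianCycle.mono (le_graphClosure Γ),
    SimpleGraph.HasHamiltonianCycle.of_le (le_graphClosure Γ) fun _ _ hxy hΓ =>
      hxy.2.resolve_left hΓ⟩
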